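/- arXiv:2309.11780 — 2 statements merged into one kernel-verified Lean document; each statement's English description precedes it below -/
import Mathlib

section
/- Let F : C → D be a Krull–Schmidt functor between Krull–Schmidt categories, let A be an object of C such that F(A') is nonzero for every nonzero direct summand A' of A, and let μ : A → A be an endomorphism of A. If F(μ) is the identity morphism of F(A), then μ is an isomorphism. -/
open CategoryTheory CategoryTheory.Limits

universe v₁ v₂ u₁ u₂

attribute [local instance] CategoryTheory.Limits.hasBinaryBiproducts_of_finite_biproducts

/-- The Jacobson radical of a (possibly noncommutative) ring, as a set:
those `x` such that `1 - y * x` is a unit for every `y`. -/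
def jacobsonRadicalSet (R : Type*) [Ring R] : Set R :=
  {x | ∀ y : R, IsUnit (1 - y * x)}

variable {C : Type u₁} [Category.{v₁} C] [Preadditive C] [HasFiniteBiproducts C]
variable {D : Type u₂} [Category.{v₂} D] [Preadditive D] [HasFiniteBiproducts D]

/-- An object is indecomposable if it is nonzero and in any biproduct
decomposition one of the two factors is zero. -/
def IsIndecomposable (X : C) : Prop :=
  ¬ IsZero X ∧ ∀ Y Z : C, Nonempty (X ≅ Y ⊞ Z) → IsZero Y ∨ IsZero Z

/-- `A'` is a direct summand of `A`. -/
def IsSummand (A A' : C) : Prop :=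
  ∃ A'' : C, Nonempty (A ≅ A' ⊞ A'')

/-- A Krull–Schmidt category: every object is isomorphic to a finite biproduct of
indecomposable objects, each having a local endomorphism ring. -/
def IsKrullSchmidtCat (C : Type u₁) [Category.{v₁} C] [Preadditive C]
    [HasFiniteBiproducts C] : Prop :=
  ∀ A : C, ∃ (n : ℕ) (X : Fin n → C),
    (∀ i, IsIndecomposable (X i) ∧ IsLocalRing (End (X i))) ∧ Nonempty (A ≅ ⨁ X)

/-- A Krull–Schmidt functor: for every indecomposable object `A`, the induced map
`End A → End (F A)` sends the Jacobson radical into the Jacobson radical. -/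
def IsKrullSchmidtFunctor (F : C ⥤ D) : Prop :=
  ∀ A : C, IsIndecomposable A →
    ∀ μ : End A, μ ∈ jacobsonRadicalSet (End A) →
      (F.map μ : End (F.obj A)) ∈ jacobsonRadicalSet (End (F.obj A))

/-!
Decompose `A` into objects with local endomorphism rings and induct on the number of
summands. Write `μ` as a `2 × 2` matrix over `A ≅ X ⊞ A'`. Its corner `a : X ⟶ X` satisfies
`F a = 1`, so `F (1 - a) = 0`; as `End X` is local, either `1 - a` is invertible, forcing
`F X = 0` against the hypothesis on summands, or `a` is invertible. In the latter case Gaussian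
elimination reduces `μ` to its Schur complement on `A'`, which `F` again sends to the identity
because `F` kills the off-diagonal entries of the identity matrix.
-/

theorem IsSummand.trans {A B A' : C} (hB : IsSummand A B) (hA' : IsSummand B A') :
    IsSummand A A' := by
  obtain ⟨Q, ⟨e⟩⟩ := hB
  obtain ⟨A'', ⟨e'⟩⟩ := hA'
  exact ⟨A'' ⊞ Q, ⟨e ≪≫ biprod.mapIso e' (Iso.refl Q) ≪≫ biprod.associator _ _ _⟩⟩

noncomputable def biproductFinSuccIso {n : ℕ} (X : Fin (n + 1) → C) :
    (⨁ X) ≅ X 0 ⊞ ⨁ (fun i : Fin n => X i.succ) where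
  hom := biprod.lift (biproduct.π X 0) (biproduct.lift fun i => biproduct.π X i.succ)
  inv := biprod.desc (biproduct.ι X 0) (biproduct.desc fun i => biproduct.ι X i.succ)
  hom_inv_id := by
    rw [biprod.lift_desc, biproduct.lift_desc, ← biproduct.total, Fin.sum_univ_succ]
  inv_hom_id := by
    ext
    · simp
    · simp [(Fin.succ_ne_zero _).symm]
    · simp [Fin.succ_ne_zero]
    · simp [biproduct.ι_π, Fin.succ_inj]

section

variable {𝒜 : Type*} [Category 𝒜] {ℬ : Type*} [Category ℬ]

theorem Biprod.isIso_ofComponents [Preadditive 𝒜] [HasBinaryBiproducts 𝒜] {X₁ X₂ Y₁ Y₂ : 𝒜}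
    (f₁₁ : X₁ ⟶ Y₁) (f₁₂ : X₁ ⟶ Y₂) (f₂₁ : X₂ ⟶ Y₁) (f₂₂ : X₂ ⟶ Y₂) [IsIso f₁₁]
    [IsIso (f₂₂ - f₂₁ ≫ inv f₁₁ ≫ f₁₂)] : IsIso (Biprod.ofComponents f₁₁ f₁₂ f₂₁ f₂₂) := by
  obtain ⟨L, R, hLR⟩ : ∃ (L : X₁ ⊞ X₂ ≅ X₁ ⊞ X₂) (R : Y₁ ⊞ Y₂ ≅ Y₁ ⊞ Y₂),
      L.hom ≫ Biprod.ofComponents f₁₁ f₁₂ f₂₁ f₂₂ ≫ R.hom =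
        biprod.map f₁₁ (f₂₂ - f₂₁ ≫ inv f₁₁ ≫ f₁₂) :=
    ⟨_, _, (Biprod.gaussian' f₁₁ f₁₂ f₂₁ f₂₂).2.2.2⟩
  have hdiag : Biprod.ofComponents f₁₁ f₁₂ f₂₁ f₂₂ =
      L.inv ≫ (biprod.mapIso (asIso f₁₁) (asIso (f₂₂ - f₂₁ ≫ inv f₁₁ ≫ f₁₂))).hom ≫ R.inv := by
    rw [biprod.mapIso_hom, asIso_hom, asIso_hom, ← hLR]
    simp
  rw [hdiag]
  infer_instance

def IsIsoOfMapEqId (F : 𝒜 ⥤ ℬ) (X : 𝒜) : Prop :=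
  ∀ μ : X ⟶ X, F.map μ = 𝟙 (F.obj X) → IsIso μ

namespace IsIsoOfMapEqId

variable {F : 𝒜 ⥤ ℬ}

theorem of_iso {X Y : 𝒜} (hX : IsIsoOfMapEqId F X) (e : X ≅ Y) : IsIsoOfMapEqId F Y := by
  intro μ hμ
  have hconj : IsIso (e.hom ≫ μ ≫ e.inv) := hX _ (by simp [hμ])
  have hμ_eq : μ = e.inv ≫ (e.hom ≫ μ ≫ e.inv) ≫ e.hom := by simp
  rw [hμ_eq]
  infer_instance

theorem of_isZero {X : 𝒜} (hX : IsZero X) : IsIsoOfMapEqId F X := by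
  intro μ _
  rw [hX.eq_of_src μ (𝟙 X)]
  infer_instance

variable [Preadditive 𝒜] [Preadditive ℬ] [F.Additive]

theorem of_isLocalRing {X : 𝒜} [IsLocalRing (End X)] (hFX : ¬ IsZero (F.obj X)) :
    IsIsoOfMapEqId F X := by
  intro μ hμ
  have hF : F.map (𝟙 X - μ) = 0 := by rw [F.map_sub, F.map_id, hμ, sub_self]
  rcases IsLocalRing.isUnit_or_isUnit_of_add_one (R := End X) (a := μ) (b := 𝟙 X - μ)
    (add_sub_cancel μ (𝟙 X)) with hu | hu
  · exact (isUnit_iff_isIso _).1 hu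
  · rw [isUnit_iff_isIso] at hu
    exact absurd (IsZero.of_mono_eq_zero _ hF) hFX

theorem biprod [HasBinaryBiproducts 𝒜] {X₁ X₂ : 𝒜} (h₁ : IsIsoOfMapEqId F X₁)
    (h₂ : IsIsoOfMapEqId F X₂) : IsIsoOfMapEqId F (X₁ ⊞ X₂) := by
  intro μ hμ
  have hentry : ∀ {Y Z : 𝒜} (i : Y ⟶ X₁ ⊞ X₂) (p : X₁ ⊞ X₂ ⟶ Z),
      F.map (i ≫ μ ≫ p) = F.map (i ≫ p) := fun i p => by
    rw [F.map_comp, F.map_comp, hμ, Category.id_comp, F.map_comp]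
  have : IsIso (biprod.inl ≫ μ ≫ biprod.fst) :=
    h₁ _ (by rw [hentry, biprod.inl_fst, F.map_id])
  have : IsIso (biprod.inr ≫ μ ≫ biprod.snd -
      (biprod.inr ≫ μ ≫ biprod.fst) ≫ inv (biprod.inl ≫ μ ≫ biprod.fst) ≫
        biprod.inl ≫ μ ≫ biprod.snd) :=
    h₂ _ (by rw [F.map_sub, hentry, biprod.inr_snd, F.map_id, F.map_comp, hentry,
      biprod.inr_fst, F.map_zero, zero_comp, sub_zero])
  have hμ_eq := Biprod.isIso_ofComponents (biprod.inl ≫ μ ≫ biprod.fst)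
    (biprod.inl ≫ μ ≫ biprod.snd) (biprod.inr ≫ μ ≫ biprod.fst) (biprod.inr ≫ μ ≫ biprod.snd)
  rwa [Biprod.ofComponents_eq] at hμ_eq

end IsIsoOfMapEqId

end

theorem isIsoOfMapEqId_of_iso_biproduct {E : Type*} [Category E] [Preadditive E] (F : C ⥤ E)
    [F.Additive] {n : ℕ} (X : Fin n → C) (hloc : ∀ i, IsLocalRing (End (X i)))
    {B : C} (e : B ≅ ⨁ X)
    (hdense : ∀ A' : C, IsSummand B A' → ¬ IsZero A' → ¬ IsZero (F.obj A')) :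
    IsIsoOfMapEqId F B := by
  induction n generalizing B with
  | zero =>
    refine IsIsoOfMapEqId.of_isZero (IsZero.of_iso ?_ e)
    exact (IsZero.iff_id_eq_zero _).2 (biproduct.hom_ext _ _ fun j => j.elim0)
  | succ n ih =>
    let e' := e ≪≫ biproductFinSuccIso X
    have htail : IsSummand B (⨁ fun i : Fin n => X i.succ) := ⟨X 0, ⟨e' ≪≫ biprod.braiding _ _⟩⟩
    have := hloc 0
    have hX₀ : ¬ IsZero (X 0) := fun h => one_ne_zero (α := End (X 0)) (h.eq_of_src _ _)
    have h₀ : IsIsoOfMapEqId F (X 0) :=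
      IsIsoOfMapEqId.of_isLocalRing (hdense _ ⟨_, ⟨e'⟩⟩ hX₀)
    have h₁ : IsIsoOfMapEqId F (⨁ fun i : Fin n => X i.succ) :=
      ih _ (fun i => hloc i.succ) (Iso.refl _)
        fun A' hA' => hdense A' (htail.trans hA')
    exact (h₀.biprod h₁).of_iso e'.symm

theorem statement0_general
    (hC : IsKrullSchmidtCat C)
    (F : C ⥤ D) [F.Additive]
    (A : C)
    (hdense : ∀ A' : C, IsSummand A A' → ¬ IsZero A' → ¬ IsZero (F.obj A'))
    (μ : A ⟶ A) (hμ : F.map μ = 𝟙 (F.obj A)) :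
    IsIso μ := by
  obtain ⟨n, X, hX, ⟨e⟩⟩ := hC A
  exact isIsoOfMapEqId_of_iso_biproduct F X (fun i => (hX i).2) e hdense μ hμ

/-- If `F` is a Krull–Schmidt functor between Krull–Schmidt categories, `A` is an object
all of whose nonzero direct summands have nonzero image under `F`, and `μ : A ⟶ A` is an
endomorphism with `F.map μ` the identity, then `μ` is an isomorphism. -/
theorem statement0
    (hC : IsKrullSchmidtCat C) (hD : IsKrullSchmidtCat D)
    (F : C ⥤ D) [F.Additive] (hF : IsKrullSchmidtFunctor F)
    (A : C)
    (hdense : ∀ A' : C, IsSummand A A' → ¬ IsZero A' → ¬ IsZero (F.obj A'))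
    (μ : A ⟶ A) (hμ : F.map μ = 𝟙 (F.obj A)) :
    IsIso μ :=
  statement0_general hC F A hdense μ hμ
end

section
/- Let F : C → D be a Krull–Schmidt functor between Krull–Schmidt categories. Then every object A of C admits a direct sum decomposition A ≅ A_F ⊕ A_0 such that A_F is F-dense and F sends every indecomposable direct summand of A_0 to a zero object (so A_F is a maximal F-dense summand of A). Moreover the isomorphism class of A_F is uniquely determined by A (the decomposition is unique up to non-unique isomorphism). -/
open CategoryTheory CategoryTheory.Limits

universe v₁ v₂ u₁ u₂

attribute [local instance] CategoryTheory.Limits.hasBinaryBiproducts_of_finite_biproducts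

variable {C : Type u₁} [Category.{v₁} C] [Preadditive C] [HasFiniteBiproducts C]
variable {D : Type u₂} [Category.{v₂} D] [Preadditive D] [HasFiniteBiproducts D]

/-- An object `A` is `F`-dense if `F` sends every nonzero direct summand of `A`
to a nonzero object. -/
def IsFDense (F : C ⥤ D) (A : C) : Prop :=
  ∀ A' : C, IsSummand A A' → ¬ IsZero A' → ¬ IsZero (F.obj A')

/-!
Decompose `A ≅ ⨁ Xᵢ` with every `End Xᵢ` local; let `A_F` collect the `Xᵢ` not killed by `F`
and `A_0` the others, which `F` kills since it is additive. If `Y` has a local endomorphism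
ring and is a retract of `⨁ Xᵢ`, then `𝟙_Y = ∑ᵢ (Y → Xᵢ → Y)` in the local ring `End Y`, so
one term is a unit, and then `Y → Xᵢ` is an isomorphism because the only idempotents of the
local ring `End Xᵢ` are `0` and `1`. Applied to a summand `Y` of a nonzero summand of `A_F`,
this gives density. The same exchange, followed by Gaussian elimination of the matched
summands, proves the Krull–Schmidt theorem. Refining another decomposition `B_F ⊞ B_0` into
indecomposables and matching it with the `Xᵢ`, density of `B_F` and the vanishing on `B_0` say
precisely that the `Xᵢ` matched with `B_F` are those not killed by `F`.
-/

theorem IsLocalRing.eq_zero_or_one_of_isIdempotentElem {R : Type*} [Ring R] [IsLocalRing R]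
    {e : R} (he : IsIdempotentElem e) : e = 0 ∨ e = 1 := by
  rcases IsLocalRing.isUnit_or_isUnit_of_add_one (add_sub_cancel e 1) with hu | hu
  · exact Or.inr (hu.mul_left_cancel (by rw [he.eq, mul_one]))
  · exact Or.inl (hu.mul_left_cancel (by rw [sub_mul, one_mul, he.eq, sub_self, mul_zero]))

theorem isIso_of_isIso_comp_of_isLocalRing {𝒞 : Type*} [Category 𝒞] [Preadditive 𝒞]
    {X Y : 𝒞} [Nontrivial (End X)] [IsLocalRing (End Y)] (f : X ⟶ Y) (g : Y ⟶ X) [IsIso (f ≫ g)] :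
    IsIso f := by
  set g' := g ≫ inv (f ≫ g)
  have hfg : f ≫ g' = 𝟙 X := by rw [← Category.assoc, IsIso.hom_inv_id]
  set e : End Y := g' ≫ f
  have he : IsIdempotentElem e := by
    change (g' ≫ f) ≫ g' ≫ f = g' ≫ f
    rw [Category.assoc, reassoc_of% hfg]
  rcases IsLocalRing.eq_zero_or_one_of_isIdempotentElem he with h0 | h1
  · refine absurd ?_ (one_ne_zero (α := End X))
    calc (𝟙 X : End X) = f ≫ e ≫ g' := by simp only [e, Category.assoc, reassoc_of% hfg, hfg]
      _ = 0 := by rw [h0]; simp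
  · exact ⟨g', hfg, h1⟩

namespace CategoryTheory.Limits

variable {ι : Type} [Fintype ι]

@[simps]
noncomputable def biproduct.isoBiprodNe [DecidableEq ι] (X : ι → C) (i : ι) :
    ⨁ X ≅ X i ⊞ ⨁ Subtype.restrict (· ≠ i) X where
  hom := biprod.lift (biproduct.π X i) (biproduct.toSubtype X _)
  inv := biprod.desc (biproduct.ι X i) (biproduct.fromSubtype X _)
  hom_inv_id := by
    ext j
    by_cases h : j = i
    · subst h; simp
    · simp [biproduct.ι_π_ne _ (Ne.symm h), h]
  inv_hom_id := by apply biprod.hom_ext' <;> apply biprod.hom_ext <;> simp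

theorem biproduct.fromSubtype_toSubtype_of_disjoint (X : ι → C) {p q : ι → Prop}
    (h : ∀ i, p i → ¬ q i) : biproduct.fromSubtype X p ≫ biproduct.toSubtype X q = 0 :=
  biproduct.hom_ext' _ _ fun j => biproduct.hom_ext _ _ fun k => by
    have hjk : (j : ι) ≠ k := fun hjk => h j j.2 (by rw [hjk]; exact k.2)
    rw [comp_zero, zero_comp, Category.assoc, Category.assoc, biproduct.ι_fromSubtype_assoc]
    -- `Subtype.restrict q X k` and `X ↑k` agree only after unfolding `Subtype.restrict`
    erw [biproduct.toSubtype_π, biproduct.ι_π_ne _ hjk]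
    rfl

noncomputable def biproduct.isoBiprodSubtype (X : ι → C) (p : ι → Prop) [DecidablePred p] :
    ⨁ X ≅ (⨁ Subtype.restrict p X) ⊞ ⨁ Subtype.restrict (¬ p ·) X where
  hom := biprod.lift (biproduct.toSubtype X _) (biproduct.toSubtype X _)
  inv := biprod.desc (biproduct.fromSubtype X _) (biproduct.fromSubtype X _)
  hom_inv_id := by
    ext j
    by_cases h : p j <;> simp [h]
  inv_hom_id := by
    apply biprod.hom_ext' <;> apply biprod.hom_ext <;>
      simp [biproduct.fromSubtype_toSubtype_of_disjoint]

variable {J K : Type} [Fintype J] [Fintype K]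

noncomputable def biproduct.sumElimIso (Z : J → C) (W : K → C) :
    ⨁ Sum.elim Z W ≅ (⨁ Z) ⊞ ⨁ W :=
  biproduct.isoBiprodSubtype _ (fun x => x.isLeft) ≪≫ biprod.mapIso
    (biproduct.whiskerEquiv Equiv.sumIsLeft.symm fun _ => Iso.refl _).symm
    (biproduct.whiskerEquiv ((Equiv.subtypeEquivRight fun _ => Sum.not_isLeft).trans
      Equiv.sumIsRight).symm fun _ => Iso.refl _).symm

end CategoryTheory.Limits

theorem exists_isIso_comp_π_of_retract {ι : Type} [Fintype ι] {X : ι → C}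
    [∀ i, IsLocalRing (End (X i))] {Y : C} [IsLocalRing (End Y)] (h : Retract Y (⨁ X)) :
    ∃ i, IsIso (h.i ≫ biproduct.π X i) := by
  let φ : ι → End Y := fun i => h.i ≫ biproduct.π X i ≫ biproduct.ι X i ≫ h.r
  have hsum : ∑ i, φ i = 1 :=
    calc ∑ i, h.i ≫ biproduct.π X i ≫ biproduct.ι X i ≫ h.r
        = h.i ≫ (∑ i, biproduct.π X i ≫ biproduct.ι X i) ≫ h.r := by
          simp only [Preadditive.sum_comp, Preadditive.comp_sum, Category.assoc]
      _ = 𝟙 Y := by rw [biproduct.total, Category.id_comp, h.retract]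
  obtain ⟨i, -, hi⟩ := IsLocalRing.exists_of_isUnit_sum (hsum ▸ isUnit_one)
  have : IsIso ((h.i ≫ biproduct.π X i) ≫ biproduct.ι X i ≫ h.r) := by
    simpa [φ, isUnit_iff_isIso] using hi
  exact ⟨i, isIso_of_isIso_comp_of_isLocalRing _ (biproduct.ι X i ≫ h.r)⟩

instance {ι : Type} {X : ι → C} [h : ∀ i, IsLocalRing (End (X i))] {p : ι → Prop}
    (j : Subtype p) : IsLocalRing (End (Subtype.restrict p X j)) :=
  h j

theorem exists_equiv_nonempty_iso_of_biproduct_iso {ι κ : Type} [Fintype ι] [Fintype κ]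
    {X : ι → C} {Y : κ → C} [∀ i, IsLocalRing (End (X i))] [∀ k, IsLocalRing (End (Y k))]
    (e : ⨁ X ≅ ⨁ Y) : ∃ σ : ι ≃ κ, ∀ i, Nonempty (X i ≅ Y (σ i)) := by
  classical
  induction hn : Fintype.card ι generalizing ι κ with
  | zero =>
    have : IsEmpty ι := Fintype.card_eq_zero_iff.mp hn
    have : IsEmpty κ := ⟨fun k => by
      obtain ⟨i, -⟩ := exists_isIso_comp_π_of_retract
        { i := biproduct.ι Y k ≫ e.inv, r := e.hom ≫ biproduct.π Y k : Retract (Y k) (⨁ X) }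
      exact isEmptyElim i⟩
    exact ⟨Equiv.equivOfIsEmpty ι κ, isEmptyElim⟩
  | succ n ih =>
    obtain ⟨i₀⟩ : Nonempty ι := Fintype.card_pos_iff.mp (by omega)
    obtain ⟨k₀, hk₀⟩ := exists_isIso_comp_π_of_retract
      { i := biproduct.ι X i₀ ≫ e.hom, r := e.inv ≫ biproduct.π X i₀ : Retract (X i₀) (⨁ Y) }
    let e' := (biproduct.isoBiprodNe X i₀).symm ≪≫ e ≪≫ biproduct.isoBiprodNe Y k₀
    have : IsIso (biprod.inl ≫ e'.hom ≫ biprod.fst) := by simpa [e'] using hk₀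
    obtain ⟨σ', hσ'⟩ := ih (Biprod.isoElim e') (by simp [Fintype.card_subtype_compl, hn])
    refine ⟨(Equiv.optionSubtypeNe i₀).symm.trans
      (σ'.optionCongr.trans (Equiv.optionSubtypeNe k₀)), fun i => ?_⟩
    by_cases hi : i = i₀
    · subst hi
      simpa using ⟨asIso ((biproduct.ι X i ≫ e.hom) ≫ biproduct.π Y k₀)⟩
    · simpa [Equiv.optionSubtypeNe_symm_of_ne hi] using hσ' ⟨i, hi⟩

theorem nonempty_biproduct_restrict_iso {ι J K : Type} [Fintype ι] [Fintype J] [Fintype K]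
    {X : ι → C} {Z : J → C} {W : K → C} (σ : ι ≃ J ⊕ K)
    (hσ : ∀ i, Nonempty (X i ≅ Sum.elim Z W (σ i))) {p : ι → Prop}
    (hp : ∀ i, p i ↔ (σ i).isLeft) : Nonempty (⨁ Subtype.restrict p X ≅ ⨁ Z) := by
  let τ : J ≃ {i // p i} := ((σ.subtypeEquiv hp).trans Equiv.sumIsLeft).symm
  have hτ : ∀ j, Nonempty (X (τ j) ≅ Z j) := fun j => by simpa [τ] using hσ (τ j)
  exact ⟨(biproduct.whiskerEquiv τ fun j => Classical.choice (hτ j)).symm⟩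

theorem IsSummand.nonempty_retract {A B : C} (h : IsSummand A B) : Nonempty (Retract B A) := by
  obtain ⟨E, ⟨e⟩⟩ := h
  exact ⟨{ i := biprod.inl ≫ e.inv, r := e.hom ≫ biprod.fst }⟩

theorem isSummand_of_iso_biproduct {ι : Type} [Fintype ι] {A : C} {X : ι → C}
    (e : A ≅ ⨁ X) (i : ι) : IsSummand A (X i) := by
  classical
  exact ⟨_, ⟨e ≪≫ biproduct.isoBiprodNe X i⟩⟩

theorem isZero_map_biproduct {𝒟 : Type*} [Category 𝒟] [Preadditive 𝒟] (F : C ⥤ 𝒟)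
    [F.Additive] {ι : Type} [Fintype ι] {X : ι → C} (hX : ∀ i, IsZero (F.obj (X i))) :
    IsZero (F.obj (⨁ X)) := by
  rw [IsZero.iff_id_eq_zero, ← F.map_id, ← biproduct.total, F.map_sum]
  exact Finset.sum_eq_zero fun i _ => by
    rw [F.map_comp, (hX i).eq_of_tgt (F.map _) 0, zero_comp]

theorem IsKrullSchmidtCat.exists_isLocalRing_summand (hC : IsKrullSchmidtCat C) {A : C}
    (hA : ¬ IsZero A) : ∃ Y : C, IsLocalRing (End Y) ∧ IsSummand A Y := by
  obtain ⟨_ | n, X, hX, ⟨e⟩⟩ := hC A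
  · exact absurd (((IsZero.iff_id_eq_zero _).2 (biproduct.hom_ext _ _ (·.elim0))).of_iso e) hA
  · exact ⟨X 0, (hX 0).2, isSummand_of_iso_biproduct e 0⟩

theorem isFDense_biproduct {𝒟 : Type*} [Category 𝒟] [HasZeroMorphisms 𝒟]
    (hC : IsKrullSchmidtCat C) (F : C ⥤ 𝒟) {ι : Type} [Fintype ι] {X : ι → C}
    [∀ i, IsLocalRing (End (X i))] (hX : ∀ i, ¬ IsZero (F.obj (X i))) : IsFDense F (⨁ X) := by
  intro A' hA' hA'0 hFA'
  obtain ⟨Y, hY, hYA'⟩ := hC.exists_isLocalRing_summand hA'0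
  obtain ⟨ρ⟩ := hYA'.nonempty_retract
  obtain ⟨ρ'⟩ := hA'.nonempty_retract
  obtain ⟨i, hi⟩ := exists_isIso_comp_π_of_retract (ρ.trans ρ')
  have hFY : IsZero (F.obj Y) := hFA'.of_mono (F.map ρ.i)
  exact hX i (hFY.of_iso (F.mapIso (asIso ((ρ.trans ρ').i ≫ biproduct.π X i))).symm)

theorem nonempty_iso_of_isFDense {𝒟 : Type*} [Category 𝒟] (hC : IsKrullSchmidtCat C)
    (F : C ⥤ 𝒟) {ι : Type} [Fintype ι] {X : ι → C}
    [∀ i, IsLocalRing (End (X i))] {B_F B_0 : C} (e : ⨁ X ≅ B_F ⊞ B_0) (hB_F : IsFDense F B_F)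
    (hB_0 : ∀ Y : C, IsIndecomposable Y → IsSummand B_0 Y → IsZero (F.obj Y)) :
    Nonempty (⨁ Subtype.restrict (fun i => ¬ IsZero (F.obj (X i))) X ≅ B_F) := by
  obtain ⟨m, Z, hZ, ⟨eZ⟩⟩ := hC B_F
  obtain ⟨l, W, hW, ⟨eW⟩⟩ := hC B_0
  have : ∀ x, IsLocalRing (End (Sum.elim Z W x)) := by
    rintro (j | k)
    exacts [(hZ j).2, (hW k).2]
  obtain ⟨σ, hσ⟩ := exists_equiv_nonempty_iso_of_biproduct_iso
    (e ≪≫ biprod.mapIso eZ eW ≪≫ (biproduct.sumElimIso Z W).symm)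
  have hleft : ∀ x, ¬ IsZero (F.obj (Sum.elim Z W x)) ↔ x.isLeft := by
    rintro (j | k)
    · simpa using hB_F (Z j) (isSummand_of_iso_biproduct eZ j) (hZ j).1.1
    · simpa using hB_0 (W k) (hW k).1 (isSummand_of_iso_biproduct eW k)
  have hp : ∀ i, ¬ IsZero (F.obj (X i)) ↔ (σ i).isLeft := fun i => by
    obtain ⟨φ⟩ := hσ i
    rw [← hleft, (F.mapIso φ).isZero_iff]
  obtain ⟨φ⟩ := nonempty_biproduct_restrict_iso σ hσ hp
  exact ⟨φ ≪≫ eZ.symm⟩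

theorem statement1_general
    (hC : IsKrullSchmidtCat C)
    (F : C ⥤ D) [F.Additive] (A : C) :
    ∃ (A_F A_0 : C) (_ : A ≅ A_F ⊞ A_0),
      IsFDense F A_F ∧
      (∀ X : C, IsIndecomposable X → IsSummand A_0 X → IsZero (F.obj X)) ∧
      ∀ (B_F B_0 : C), (A ≅ B_F ⊞ B_0) → IsFDense F B_F →
        (∀ X : C, IsIndecomposable X → IsSummand B_0 X → IsZero (F.obj X)) →
        Nonempty (A_F ≅ B_F) := by
  classical
  obtain ⟨n, X, hX, ⟨eA⟩⟩ := hC A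
  have (i : Fin n) : IsLocalRing (End (X i)) := (hX i).2
  refine ⟨_, _, eA ≪≫ biproduct.isoBiprodSubtype X (fun i => ¬ IsZero (F.obj (X i))),
    isFDense_biproduct hC F fun j => j.2, fun Y _ hY => ?_,
    fun B_F B_0 eB hB_F hB_0 => nonempty_iso_of_isFDense hC F (eA.symm ≪≫ eB) hB_F hB_0⟩
  obtain ⟨ρ⟩ := hY.nonempty_retract
  exact (isZero_map_biproduct F fun k => not_not.mp k.2).of_mono (F.map ρ.i)

/-- Every object `A` of a Krull–Schmidt category admits a decomposition `A ≅ A_F ⊞ A_0`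
where `A_F` is `F`-dense and every indecomposable summand of `A_0` is killed by `F`
(so `A_F` is a maximal `F`-dense summand); moreover `A_F` is unique up to isomorphism. -/
theorem statement1
    (hC : IsKrullSchmidtCat C) (hD : IsKrullSchmidtCat D)
    (F : C ⥤ D) [F.Additive] (hF : IsKrullSchmidtFunctor F) (A : C) :
    ∃ (A_F A_0 : C) (_ : A ≅ A_F ⊞ A_0),
      IsFDense F A_F ∧
      (∀ X : C, IsIndecomposable X → IsSummand A_0 X → IsZero (F.obj X)) ∧
      ∀ (B_F B_0 : C), (A ≅ B_F ⊞ B_0) → IsFDense F B_F →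
        (∀ X : C, IsIndecomposable X → IsSummand B_0 X → IsZero (F.obj X)) →
        Nonempty (A_F ≅ B_F) :=
  statement1_general hC F A
end
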